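/- arXiv:1705.00606 — 3 statements merged into one kernel-verified Lean document; each statement's English description precedes it below -/
import Mathlib

section
/- Let Ω ⊂ ℝⁿ be an open set, E₀ ⊂ Ω a Borel set, a < b real numbers, and u_{E₀} := a·χ_{E₀} + b·χ_{Ω∖E₀}. If u ∈ L¹(Ω) satisfies ‖u − u_{E₀}‖_{L¹} ≤ (b−a)δ for some δ > 0, then for every s ∈ ℝ, min{ℒⁿ(E₀ ∖ {u ≤ s}), ℒⁿ({u ≤ s} ∖ E₀)} ≤ δ. -/
/-! Markov's inequality for `|u - u_{E₀}|`, applied on `E₀` with threshold `s - a` and on `Ω ∖ E₀`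
with threshold `b - s`, bounds `(s - a) ℒⁿ(E₀ ∖ {u ≤ s}) + (b - s) ℒⁿ({u ≤ s} ∖ E₀)` by the `L¹`
distance; the two thresholds add up to `b - a`. -/

open scoped Classical ENNReal
open MeasureTheory Set

theorem ENNReal.min_le_of_mul_add_mul_le {c c₁ c₂ m₁ m₂ d : ℝ≥0∞} (hc₀ : c ≠ 0) (hc : c ≠ ∞)
    (hsplit : c ≤ c₁ + c₂) (h : c₁ * m₁ + c₂ * m₂ ≤ c * d) : min m₁ m₂ ≤ d := by
  refine (ENNReal.mul_le_mul_iff_right hc₀ hc).mp ?_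
  calc c * min m₁ m₂ ≤ (c₁ + c₂) * min m₁ m₂ := by gcongr
    _ = c₁ * min m₁ m₂ + c₂ * min m₁ m₂ := add_mul _ _ _
    _ ≤ c₁ * m₁ + c₂ * m₂ := by gcongr; exacts [min_le_left _ _, min_le_right _ _]
    _ ≤ c * d := h

section

variable {α : Type*} [MeasurableSpace α] {μ : Measure α}

theorem mul_measure_le_setLIntegral {S A : Set α} (hS : MeasurableSet S) {g : α → ℝ≥0∞}
    (hg : AEMeasurable g (μ.restrict S)) (hAS : A ⊆ S) {c : ℝ≥0∞} (hc : ∀ x ∈ A, c ≤ g x) :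
    c * μ A ≤ ∫⁻ x in S, g x ∂μ :=
  calc c * μ A ≤ c * μ.restrict S {x | c ≤ g x} := by
        rw [Measure.restrict_apply' hS]
        gcongr
        exact fun x hx => ⟨hc x hx, hAS hx⟩
    _ ≤ ∫⁻ x in S, g x ∂μ := mul_meas_ge_le_lintegral₀ hg c

theorem min_measure_diff_levelSet_le {E : Set α} (hE : MeasurableSet E) {a b : ℝ} (hab : a < b)
    {v : α → ℝ} (hint : Integrable (fun x => |v x - if x ∈ E then a else b|) μ) {δ : ℝ}
    (hL1 : ∫ x, |v x - if x ∈ E then a else b| ∂μ ≤ (b - a) * δ) (s : ℝ) :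
    min (μ (E \ {x | v x ≤ s})) (μ ({x | v x ≤ s} \ E)) ≤ ENNReal.ofReal δ := by
  set g : α → ℝ≥0∞ := fun x => ENNReal.ofReal |v x - if x ∈ E then a else b|
  have hg : AEMeasurable g μ := hint.aemeasurable.ennreal_ofReal
  have hinside : ENNReal.ofReal (s - a) * μ (E \ {x | v x ≤ s}) ≤ ∫⁻ x in E, g x ∂μ := by
    refine mul_measure_le_setLIntegral hE hg.restrict sdiff_subset fun x ⟨hxE, hxs⟩ => ?_
    simp only [g, if_pos hxE]
    exact ENNReal.ofReal_le_ofReal ((sub_le_sub_right (le_of_not_ge hxs) a).trans (le_abs_self _))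
  have houtside : ENNReal.ofReal (b - s) * μ ({x | v x ≤ s} \ E) ≤ ∫⁻ x in Eᶜ, g x ∂μ := by
    refine mul_measure_le_setLIntegral hE.compl hg.restrict (fun _ hx => hx.2)
      fun x ⟨hxs, hxE⟩ => ?_
    simp only [g, if_neg hxE]
    exact ENNReal.ofReal_le_ofReal
      ((sub_le_sub_left hxs b).trans ((le_abs_self _).trans_eq (abs_sub_comm _ _)))
  refine ENNReal.min_le_of_mul_add_mul_le (ENNReal.ofReal_pos.mpr (sub_pos.mpr hab)).ne'
    ENNReal.ofReal_ne_top (by simpa using ENNReal.ofReal_add_le (p := s - a) (q := b - s)) ?_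
  calc _ ≤ ∫⁻ x in E, g x ∂μ + ∫⁻ x in Eᶜ, g x ∂μ := add_le_add hinside houtside
    _ = ENNReal.ofReal (∫ x, |v x - if x ∈ E then a else b| ∂μ) := by
        rw [lintegral_add_compl g hE,
          ofReal_integral_eq_lintegral_ofReal hint (.of_forall fun _ => abs_nonneg _)]
    _ ≤ ENNReal.ofReal (b - a) * ENNReal.ofReal δ := by
        rw [← ENNReal.ofReal_mul (sub_nonneg.mpr hab.le)]
        exact ENNReal.ofReal_le_ofReal hL1

end

theorem stmt0_general {n : ℕ} (Ω E₀ : Set (Fin n → ℝ))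
    (hE₀meas : MeasurableSet E₀) (hE₀ : E₀ ⊆ Ω)
    (a b : ℝ) (hab : a < b) (δ : ℝ)
    (u : (Fin n → ℝ) → ℝ)
    (hint : IntegrableOn (fun x => |u x - (if x ∈ E₀ then a else b)|) Ω volume)
    (hL1 : ∫ x in Ω, |u x - (if x ∈ E₀ then a else b)| ∂volume ≤ (b - a) * δ)
    (s : ℝ) :
    min (volume (E₀ \ {x ∈ Ω | u x ≤ s})) (volume ({x ∈ Ω | u x ≤ s} \ E₀))
      ≤ ENNReal.ofReal δ := by
  have hinside : E₀ \ {x ∈ Ω | u x ≤ s} ⊆ Ω := sdiff_subset.trans hE₀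
  have houtside : {x ∈ Ω | u x ≤ s} \ E₀ ⊆ Ω := fun x hx => hx.1.1
  rw [← Measure.restrict_eq_self (μ := volume) hinside,
    ← Measure.restrict_eq_self (μ := volume) houtside]
  refine le_trans (min_le_min (measure_mono ?_) (measure_mono ?_))
    (min_measure_diff_levelSet_le hE₀meas hab hint hL1 s)
  · exact fun x ⟨hxE, hxs⟩ => ⟨hxE, fun hle => hxs ⟨hE₀ hxE, hle⟩⟩
  · exact fun x ⟨hxs, hxE⟩ => ⟨hxs.2, hxE⟩

/-- Level-set proposition. If `u` is within L¹ distance `(b-a)δ` of the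
two-valued function `u_{E₀} = a·χ_{E₀} + b·χ_{Ω∖E₀}` on `Ω`, then for every `s`, the
symmetric-difference quantity `α(E₀, {u ≤ s}) = min(ℒⁿ(E₀∖{u≤s}), ℒⁿ({u≤s}∖E₀))` is `≤ δ`. -/
theorem stmt0 {n : ℕ} (Ω E₀ : Set (Fin n → ℝ)) (hΩ : IsOpen Ω)
    (hE₀meas : MeasurableSet E₀) (hE₀ : E₀ ⊆ Ω)
    (a b : ℝ) (hab : a < b) (δ : ℝ) (hδ : 0 < δ)
    (u : (Fin n → ℝ) → ℝ)
    (hint : IntegrableOn (fun x => |u x - (if x ∈ E₀ then a else b)|) Ω volume)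
    (hL1 : ∫ x in Ω, |u x - (if x ∈ E₀ then a else b)| ∂volume ≤ (b - a) * δ)
    (s : ℝ) :
    min (volume (E₀ \ {x ∈ Ω | u x ≤ s})) (volume ({x ∈ Ω | u x ≤ s} \ E₀))
      ≤ ENNReal.ofReal δ :=
  stmt0_general Ω E₀ hE₀meas hE₀ a b hab δ u hint hL1 s
end

section
/- Let W : ℝ → [0,∞) be continuous with W > 0 on (a,b) and W(a) = W(b) = 0, a < c < b, and suppose ∫ₐᵇ W^{−1/2}(s) ds = ∞ near both endpoints. Then the solution z of z′(t) = √(W(z(t))), z(0) = c, with z(t) ∈ [a,b], is strictly increasing, defined for all t ∈ ℝ, and satisfies z(t) → a as t → −∞ and z(t) → b as t → +∞. -/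
/-!
Along a solution of the autonomous equation `z' = φ(z)` with `φ > 0`, time is the integral of
`1/φ` along the orbit: `∫_{z(t₀)}^{z(t₁)} 1/φ = t₁ - t₀`. If `z` reached the well `b` in finite
time `T`, every partial integral `∫_c^x 1/φ` with `x < b` would be bounded by `T`, making `1/φ`
integrable on `(c, b)`. If `z` stayed below some `x < b`, then `t = ∫_c^{z(t)} 1/φ ≤ ∫_c^x 1/φ`
for all `t ≥ 0`, which is absurd. The behaviour at `-∞` follows by the reflection
`t ↦ -z(-t)`, which solves the same kind of equation for `x ↦ φ(-x)`.
-/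

open Set Filter Topology intervalIntegral MeasureTheory

theorem intervalIntegrable_of_integral_le {g : ℝ → ℝ} {c b I : ℝ} (hcb : c < b)
    (hg_nonneg : ∀ x ∈ Ioo c b, 0 ≤ g x) (hg : ∀ x ∈ Ioo c b, IntegrableOn g (Icc c x))
    (hbound : ∀ x ∈ Ioo c b, ∫ y in c..x, g y ≤ I) :
    IntervalIntegrable g volume c b := by
  obtain ⟨u, -, hu, hu_lim⟩ := exists_seq_strictMono_tendsto' hcb
  rw [intervalIntegrable_iff_integrableOn_Ioc_of_le hcb.le]
  refine integrableOn_Ioc_of_intervalIntegral_norm_bounded_right (I := I)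
    (fun n => (hg _ (hu n)).mono_set Ioc_subset_Icc_self) hu_lim (.of_forall fun n => ?_)
  have hnorm : EqOn (fun y => ‖g y‖) g (Ioc c (u n)) := fun y hy =>
    Real.norm_of_nonneg (hg_nonneg y ⟨hy.1, hy.2.trans_lt (hu n).2⟩)
  rw [setIntegral_congr_fun measurableSet_Ioc hnorm, ← integral_of_le (hu n).1.le]
  exact hbound _ (hu n)

theorem integral_inv_eq_sub_of_hasDerivAt {f φ : ℝ → ℝ} {t₀ t₁ : ℝ}
    (hf : ∀ t ∈ uIcc t₀ t₁, HasDerivAt f (φ (f t)) t) (hφ : ContinuousOn φ (f '' uIcc t₀ t₁))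
    (hφ_ne : ∀ t ∈ uIcc t₀ t₁, φ (f t) ≠ 0) :
    ∫ x in f t₀..f t₁, (φ x)⁻¹ = t₁ - t₀ := by
  have hfc : ContinuousOn f (uIcc t₀ t₁) := fun t ht =>
    (hf t ht).continuousAt.continuousWithinAt
  have hφ_inv : ContinuousOn (fun x => (φ x)⁻¹) (f '' uIcc t₀ t₁) :=
    hφ.inv₀ (by rintro _ ⟨t, ht, rfl⟩; exact hφ_ne t ht)
  rw [← integral_deriv_smul_comp' hf (hφ.comp hfc (mapsTo_image _ _)) hφ_inv,
    integral_congr (g := fun _ => (1 : ℝ)) fun t ht => by simp [hφ_ne t ht]]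
  simp

section Autonomous

variable {f φ : ℝ → ℝ} {a b c : ℝ}

theorem integral_inv_eq_of_lt (hf : ∀ t, HasDerivAt f (φ (f t)) t) (hφ : Continuous φ)
    (hφ_nonneg : ∀ x, 0 ≤ φ x) (hφ_pos : ∀ x ∈ Ico c b, 0 < φ x) (hf0 : f 0 = c)
    {t : ℝ} (ht : 0 ≤ t) (hft : f t < b) :
    ∫ x in c..f t, (φ x)⁻¹ = t := by
  have hmono : Monotone f := monotone_of_hasDerivAt_nonneg hf fun t => hφ_nonneg (f t)
  have hpos : ∀ s ∈ uIcc 0 t, φ (f s) ≠ 0 := by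
    intro s hs
    rw [uIcc_of_le ht] at hs
    exact (hφ_pos _ ⟨hf0 ▸ hmono hs.1, (hmono hs.2).trans_lt hft⟩).ne'
  simpa [hf0] using integral_inv_eq_sub_of_hasDerivAt (fun s _ => hf s) hφ.continuousOn hpos

theorem lt_of_not_intervalIntegrable_inv (hf : ∀ t, HasDerivAt f (φ (f t)) t)
    (hφ : Continuous φ) (hφ_nonneg : ∀ x, 0 ≤ φ x) (hφ_pos : ∀ x ∈ Ico c b, 0 < φ x)
    (hf0 : f 0 = c) (hcb : c < b)
    (hint : ¬ IntervalIntegrable (fun x => (φ x)⁻¹) volume c b) (t : ℝ) :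
    f t < b := by
  have hmono : Monotone f := monotone_of_hasDerivAt_nonneg hf fun t => hφ_nonneg (f t)
  by_contra! hbt
  have ht : 0 ≤ t := by
    by_contra! ht
    exact (hbt.trans (hf0 ▸ hmono ht.le)).not_gt hcb
  refine hint (intervalIntegrable_of_integral_le hcb (fun x _ => inv_nonneg.2 (hφ_nonneg x))
    (fun x hx => ?_) (I := t) fun x hx => ?_)
  · exact (hφ.continuousOn.inv₀ fun y hy =>
      (hφ_pos y ⟨hy.1, hy.2.trans_lt hx.2⟩).ne').integrableOn_Icc
  · obtain ⟨s, hs, rfl⟩ := intermediate_value_Icc ht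
      (fun s _ => (hf s).continuousAt.continuousWithinAt) ⟨hf0 ▸ hx.1.le, hx.2.le.trans hbt⟩
    rw [integral_inv_eq_of_lt hf hφ hφ_nonneg hφ_pos hf0 hs.1 hx.2]
    exact hs.2

theorem isLUB_range_of_forall_lt (hf : ∀ t, HasDerivAt f (φ (f t)) t) (hφ : Continuous φ)
    (hφ_nonneg : ∀ x, 0 ≤ φ x) (hφ_pos : ∀ x ∈ Ico c b, 0 < φ x) (hf0 : f 0 = c)
    (hlt : ∀ t, f t < b) :
    IsLUB (range f) b := by
  have hmono : Monotone f := monotone_of_hasDerivAt_nonneg hf fun t => hφ_nonneg (f t)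
  refine ⟨by rintro _ ⟨t, rfl⟩; exact (hlt t).le, fun u hu => ?_⟩
  by_contra! hub
  set x := max u c
  have hfx : ∀ t, f t ≤ x := fun t => (hu ⟨t, rfl⟩).trans (le_max_left u c)
  have hx : x < b := max_lt hub (hf0 ▸ hlt 0)
  set I := ∫ y in c..x, (φ y)⁻¹
  set t := max 0 (I + 1)
  have hint : IntervalIntegrable (fun y => (φ y)⁻¹) volume c x := by
    refine (hφ.continuousOn.inv₀ fun y hy => ?_).intervalIntegrable
    rw [uIcc_of_le (le_max_right u c)] at hy
    exact (hφ_pos y ⟨hy.1, hy.2.trans_lt hx⟩).ne'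
  have htI : t ≤ I := by
    calc t = ∫ y in c..f t, (φ y)⁻¹ :=
          (integral_inv_eq_of_lt hf hφ hφ_nonneg hφ_pos hf0 (le_max_left _ _) (hlt t)).symm
      _ ≤ I := integral_mono_interval le_rfl (hf0 ▸ hmono (le_max_left _ _)) (hfx t)
          (Eventually.of_forall fun y => inv_nonneg.2 (hφ_nonneg y)) hint
  linarith [le_max_right 0 (I + 1)]

theorem forall_lt_and_tendsto_atTop (hf : ∀ t, HasDerivAt f (φ (f t)) t) (hφ : Continuous φ)
    (hφ_nonneg : ∀ x, 0 ≤ φ x) (hφ_pos : ∀ x ∈ Ico c b, 0 < φ x) (hf0 : f 0 = c)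
    (hcb : c < b) (hint : ¬ IntervalIntegrable (fun x => (φ x)⁻¹) volume c b) :
    (∀ t, f t < b) ∧ Tendsto f atTop (𝓝 b) := by
  have hlt := lt_of_not_intervalIntegrable_inv hf hφ hφ_nonneg hφ_pos hf0 hcb hint
  exact ⟨hlt, tendsto_atTop_isLUB (monotone_of_hasDerivAt_nonneg hf fun t => hφ_nonneg (f t))
    (isLUB_range_of_forall_lt hf hφ hφ_nonneg hφ_pos hf0 hlt)⟩

theorem forall_lt_and_tendsto_atBot (hf : ∀ t, HasDerivAt f (φ (f t)) t) (hφ : Continuous φ)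
    (hφ_nonneg : ∀ x, 0 ≤ φ x) (hφ_pos : ∀ x ∈ Ioc a c, 0 < φ x) (hf0 : f 0 = c)
    (hac : a < c) (hint : ¬ IntervalIntegrable (fun x => (φ x)⁻¹) volume a c) :
    (∀ t, a < f t) ∧ Tendsto f atBot (𝓝 a) := by
  have hf_refl : ∀ t, HasDerivAt (fun t => -f (-t)) (φ (- -f (-t))) t := fun t => by
    have h := ((hf (-t)).comp t (hasDerivAt_neg t)).neg
    simp only [neg_neg, mul_neg, mul_one] at h ⊢
    exact h
  obtain ⟨hlt, hlim⟩ := forall_lt_and_tendsto_atTop hf_refl (hφ.comp continuous_neg)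
    (fun x => hφ_nonneg (-x)) (fun x hx => hφ_pos (-x) ⟨by linarith [hx.2], by linarith [hx.1]⟩)
    (by simp [hf0]) (neg_lt_neg hac)
    fun h => hint ((IntervalIntegrable.iff_comp_neg).2 (by simpa using h.symm))
  refine ⟨fun t => by simpa using hlt (-t), ?_⟩
  simpa using (hlim.comp tendsto_neg_atBot_atTop).neg

end Autonomous

theorem stmt10_general (W : ℝ → ℝ) (hWcont : Continuous W)
    (a b c : ℝ) (hac : a < c) (hcb : c < b)
    (hWpos : ∀ s ∈ Ioo a b, 0 < W s)
    (hnonint₁ : ¬ IntervalIntegrable (fun s => 1 / Real.sqrt (W s)) MeasureTheory.volume a c)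
    (hnonint₂ : ¬ IntervalIntegrable (fun s => 1 / Real.sqrt (W s)) MeasureTheory.volume c b)
    (z : ℝ → ℝ) (hz : ∀ t, HasDerivAt z (Real.sqrt (W (z t))) t)
    (hz0 : z 0 = c) :
    StrictMono z ∧ Tendsto z atBot (𝓝 a) ∧ Tendsto z atTop (𝓝 b) := by
  have hpos : ∀ s ∈ Ioo a b, 0 < Real.sqrt (W s) := fun s hs => Real.sqrt_pos.2 (hWpos s hs)
  obtain ⟨hlt, htop⟩ := forall_lt_and_tendsto_atTop hz hWcont.sqrt (fun _ => Real.sqrt_nonneg _)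
    (fun s hs => hpos s ⟨hac.trans_le hs.1, hs.2⟩) hz0 hcb (by simpa only [one_div] using hnonint₂)
  obtain ⟨hgt, hbot⟩ := forall_lt_and_tendsto_atBot hz hWcont.sqrt (fun _ => Real.sqrt_nonneg _)
    (fun s hs => hpos s ⟨hs.1, hs.2.trans_lt hcb⟩) hz0 hac (by simpa only [one_div] using hnonint₁)
  exact ⟨strictMono_of_hasDerivAt_pos hz fun t => hpos _ ⟨hgt t, hlt t⟩, hbot, htop⟩

/-- heteroclinic transition profile. If `W ≥ 0` is continuous, vanishes
exactly at `a` and `b` on `[a,b]`, and `W^{-1/2}` is non-integrable near both wells, then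
the solution of `z′ = √(W(z))`, `z(0) = c ∈ (a,b)`, with values in `[a,b]`, is strictly
increasing and converges to `a` at `−∞` and to `b` at `+∞`. -/
theorem stmt10 (W : ℝ → ℝ) (hWcont : Continuous W) (hWnonneg : ∀ s, 0 ≤ W s)
    (a b c : ℝ) (hac : a < c) (hcb : c < b)
    (hWa : W a = 0) (hWb : W b = 0) (hWpos : ∀ s ∈ Ioo a b, 0 < W s)
    (hnonint₁ : ¬ IntervalIntegrable (fun s => 1 / Real.sqrt (W s)) MeasureTheory.volume a c)
    (hnonint₂ : ¬ IntervalIntegrable (fun s => 1 / Real.sqrt (W s)) MeasureTheory.volume c b)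
    (z : ℝ → ℝ) (hz : ∀ t, HasDerivAt z (Real.sqrt (W (z t))) t)
    (hz0 : z 0 = c) (hzrange : ∀ t, z t ∈ Icc a b) :
    StrictMono z ∧ Tendsto z atBot (𝓝 a) ∧ Tendsto z atTop (𝓝 b) :=
  stmt10_general W hWcont a b c hac hcb hWpos hnonint₁ hnonint₂ z hz hz0
end

section
/- Let z : ℝ → [a,b] be the solution of z′ = √(W(z)), z(0) = c, for a continuous W ≥ 0 vanishing exactly at a and b, with z(t) → a exponentially as t → −∞ and z(t) → b exponentially as t → +∞. Then the function τ ↦ ∫_ℝ (z(t − τ) − sgn_{a,b}(t)) dt is well-defined (the integrand is integrable), continuous, strictly decreasing, and surjective onto ℝ; in particular, for every r ∈ ℝ there is a unique τ with ∫_ℝ (z(t − τ) − sgn_{a,b}(t)) dt = r. -/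
/-!
Writing `s(t) = if t ≤ 0 then a else b`, split the integrand as
`z(t - τ) - s(t) = (z(t - τ) - s(t - τ)) + (s(t - τ) - s(t))`.
The first term is a translate of the integrable function `z - s` (integrable by the exponential
convergence of `z` to `a` and `b`), so its integral does not depend on `τ`; the second term is
`(a - b)` times the indicator of the interval between `0` and `τ`, taken with sign. Hence the
function of `τ` is affine with slope `a - b < 0`.
-/

open Set MeasureTheory

theorem step_comp_sub_sub_step (a b τ t : ℝ) :
    ((if t - τ ≤ 0 then a else b) - if t ≤ 0 then a else b)
      = (a - b) * ((Ioc 0 τ).indicator 1 t - (Ioc τ 0).indicator 1 t) := by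
  simp only [indicator_apply, mem_Ioc, Pi.one_apply]
  split_ifs <;> grind

theorem integrable_indicator_one_Ioc (s u : ℝ) :
    Integrable ((Ioc s u).indicator (1 : ℝ → ℝ)) :=
  (integrable_indicator_iff measurableSet_Ioc).2 (integrableOn_const measure_Ioc_lt_top.ne)

theorem integrable_step_comp_sub_sub_step (a b τ : ℝ) :
    Integrable (fun t : ℝ => (if t - τ ≤ 0 then a else b) - if t ≤ 0 then a else b) := by
  simp only [step_comp_sub_sub_step]
  exact ((integrable_indicator_one_Ioc 0 τ).sub (integrable_indicator_one_Ioc τ 0)).const_mul _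

theorem integral_step_comp_sub_sub_step (a b τ : ℝ) :
    ∫ t : ℝ, ((if t - τ ≤ 0 then a else b) - if t ≤ 0 then a else b) = (a - b) * τ := by
  simp only [step_comp_sub_sub_step]
  rw [integral_const_mul, integral_sub (integrable_indicator_one_Ioc 0 τ)
    (integrable_indicator_one_Ioc τ 0), integral_indicator_one measurableSet_Ioc,
    integral_indicator_one measurableSet_Ioc, Real.volume_real_Ioc, Real.volume_real_Ioc,
    sub_zero, zero_sub, max_zero_sub_max_neg_zero_eq_self]

theorem integrable_sub_step_of_exp_decay {f : ℝ → ℝ} (hf : AEStronglyMeasurable f)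
    {a b C K : ℝ} (hK : 0 < K)
    (ha : ∀ t ≤ (0 : ℝ), |f t - a| ≤ C * Real.exp (K * t))
    (hb : ∀ t ≥ (0 : ℝ), |f t - b| ≤ C * Real.exp (-K * t)) :
    Integrable (fun t => f t - if t ≤ 0 then a else b) := by
  have hmeas : AEStronglyMeasurable (fun t => f t - if t ≤ 0 then a else b) :=
    hf.sub (Measurable.ite measurableSet_Iic measurable_const measurable_const).aestronglyMeasurable
  rw [← integrableOn_univ, ← Iic_union_Ioi (a := (0 : ℝ))]
  refine IntegrableOn.union ?_ ?_
  · refine ((integrableOn_exp_mul_Iic hK 0).const_mul C).mono' hmeas.restrict ?_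
    filter_upwards [ae_restrict_mem measurableSet_Iic] with t ht
    simpa [if_pos (mem_Iic.1 ht)] using ha t ht
  · refine ((integrableOn_exp_mul_Ioi (neg_lt_zero.2 hK) 0).const_mul C).mono' hmeas.restrict ?_
    filter_upwards [ae_restrict_mem measurableSet_Ioi] with t ht
    simpa [if_neg (not_le.2 (mem_Ioi.1 ht))] using hb t (le_of_lt ht)

theorem comp_sub_sub_step_eq (f : ℝ → ℝ) (a b τ : ℝ) :
    (fun t => f (t - τ) - if t ≤ 0 then a else b) =
      fun t => (f (t - τ) - if t - τ ≤ 0 then a else b) +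
        ((if t - τ ≤ 0 then a else b) - if t ≤ 0 then a else b) := by
  ext t
  ring

section Translate

variable {f : ℝ → ℝ} {a b : ℝ}

theorem MeasureTheory.Integrable.comp_sub_sub_step
    (hf : Integrable (fun t => f t - if t ≤ 0 then a else b)) (τ : ℝ) :
    Integrable (fun t => f (t - τ) - if t ≤ 0 then a else b) := by
  rw [comp_sub_sub_step_eq]
  exact (hf.comp_sub_right τ).add (integrable_step_comp_sub_sub_step a b τ)

theorem integral_comp_sub_sub_step (hf : Integrable (fun t => f t - if t ≤ 0 then a else b))
    (τ : ℝ) :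
    ∫ t, (f (t - τ) - if t ≤ 0 then a else b) =
      (∫ t, (f t - if t ≤ 0 then a else b)) + (a - b) * τ := by
  rw [comp_sub_sub_step_eq, integral_add (hf.comp_sub_right τ)
    (integrable_step_comp_sub_sub_step a b τ), integral_sub_right_eq_self
    (fun t => f t - if t ≤ 0 then a else b) τ, integral_step_comp_sub_sub_step]

end Translate

theorem strictAnti_const_add_mul {c : ℝ} (hc : c < 0) (I : ℝ) :
    StrictAnti (fun τ : ℝ => I + c * τ) :=
  fun _ _ h => (add_lt_add_iff_left I).2 (mul_lt_mul_of_neg_left h hc)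

theorem surjective_const_add_mul {c : ℝ} (hc : c ≠ 0) (I : ℝ) :
    Function.Surjective (fun τ : ℝ => I + c * τ) :=
  fun r => ⟨(r - I) / c, by field_simp; ring⟩

theorem stmt12_general (W : ℝ → ℝ)
    (a b c : ℝ) (hac : a < c) (hcb : c < b)
    (z : ℝ → ℝ) (hz : ∀ t, HasDerivAt z (Real.sqrt (W (z t))) t)
    (Cd K : ℝ) (hK : 0 < K)
    (hdecA : ∀ t ≤ (0:ℝ), |z t - a| ≤ Cd * Real.exp (K * t))
    (hdecB : ∀ t ≥ (0:ℝ), |z t - b| ≤ Cd * Real.exp (-K * t)) :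
    (∀ τ : ℝ, Integrable (fun t => z (t - τ) - (if t ≤ 0 then a else b)) volume) ∧
    Continuous (fun τ => ∫ t, (z (t - τ) - (if t ≤ 0 then a else b)) ∂volume) ∧
    StrictAnti (fun τ => ∫ t, (z (t - τ) - (if t ≤ 0 then a else b)) ∂volume) ∧
    Function.Surjective (fun τ => ∫ t, (z (t - τ) - (if t ≤ 0 then a else b)) ∂volume) ∧
    (∀ r : ℝ, ∃! τ : ℝ, ∫ t, (z (t - τ) - (if t ≤ 0 then a else b)) ∂volume = r) := by
  have hzc : Continuous z := continuous_iff_continuousAt.2 fun t => (hz t).continuousAt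
  have hint := integrable_sub_step_of_exp_decay hzc.aestronglyMeasurable hK hdecA hdecB
  have hslope : a - b < 0 := sub_neg.2 (hac.trans hcb)
  have haffine : (fun τ => ∫ t, (z (t - τ) - (if t ≤ 0 then a else b))) =
      fun τ => (∫ t, (z t - if t ≤ 0 then a else b)) + (a - b) * τ :=
    funext (integral_comp_sub_sub_step hint)
  have hanti := haffine ▸ strictAnti_const_add_mul hslope _
  have hsurj := haffine ▸ surjective_const_add_mul hslope.ne _
  refine ⟨hint.comp_sub_sub_step, haffine ▸ by fun_prop, hanti, hsurj, fun r => ?_⟩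
  obtain ⟨τ, hτ⟩ := hsurj r
  exact ⟨τ, hτ, fun τ' hτ' => hanti.injective (hτ'.trans hτ.symm)⟩

/-- the function `τ ↦ ∫_ℝ (z(t−τ) − sgn_{a,b}(t)) dt` is well-defined,
continuous, strictly decreasing and surjective onto `ℝ`; in particular for every `r`
there is a unique `τ` solving `∫_ℝ (z(t−τ) − sgn_{a,b}(t)) dt = r`. -/
theorem stmt12 (W : ℝ → ℝ) (hWcont : Continuous W) (hWnonneg : ∀ s, 0 ≤ W s)
    (a b c : ℝ) (hac : a < c) (hcb : c < b)
    (hWzero : ∀ s, W s = 0 ↔ s = a ∨ s = b)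
    (z : ℝ → ℝ) (hz : ∀ t, HasDerivAt z (Real.sqrt (W (z t))) t)
    (hz0 : z 0 = c) (hzrange : ∀ t, z t ∈ Icc a b)
    (Cd K : ℝ) (hCd : 0 < Cd) (hK : 0 < K)
    (hdecA : ∀ t ≤ (0:ℝ), |z t - a| ≤ Cd * Real.exp (K * t))
    (hdecB : ∀ t ≥ (0:ℝ), |z t - b| ≤ Cd * Real.exp (-K * t)) :
    (∀ τ : ℝ, Integrable (fun t => z (t - τ) - (if t ≤ 0 then a else b)) volume) ∧
    Continuous (fun τ => ∫ t, (z (t - τ) - (if t ≤ 0 then a else b)) ∂volume) ∧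
    StrictAnti (fun τ => ∫ t, (z (t - τ) - (if t ≤ 0 then a else b)) ∂volume) ∧
    Function.Surjective (fun τ => ∫ t, (z (t - τ) - (if t ≤ 0 then a else b)) ∂volume) ∧
    (∀ r : ℝ, ∃! τ : ℝ, ∫ t, (z (t - τ) - (if t ≤ 0 then a else b)) ∂volume = r) :=
  stmt12_general W a b c hac hcb z hz Cd K hK hdecA hdecB
end
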